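/- arXiv:1902.03082 — 6 statements merged into one kernel-verified Lean document; each statement's English description precedes it below -/
import Mathlib

section
/- Let G be a group, {z_i}_{i∈I} elements of G, and {H_i}_{i∈I} subgroups with H_i contained in the centralizer of z_i. Then the disjoint union ⊔_{i∈I} (H_i\G) with operation H_i x * H_j y = H_i z_i⁻¹ x y⁻¹ z_j y is a quandle. -/
/-!
Because `H i` centralizes `z i`, both `H x ↦ H (z i)^{±1} x c` and `H y ↦ y⁻¹ (z i) y` are well
defined on right cosets of `H i`. The operation is built from these two maps, and each quandle
axiom becomes an identity in `G` between representatives.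
-/

open Quandles QuotientGroup

namespace Subgroup

variable {G : Type*} [Group G] {H : Subgroup G} {g : G}

lemma mem_normalizer_of_le_centralizer (hg : H ≤ centralizer {g}) :
    g ∈ normalizer (H : Set G) :=
  centralizer_le_normalizer _ <| mem_centralizer_iff.mpr fun _ hh =>
    mem_centralizer_singleton_iff.mp (hg hh)

def mulRightCosetMul (hg : g ∈ normalizer (H : Set G)) (c : G) :
    Quotient (rightRel H) → Quotient (rightRel H) :=
  Quotient.map (fun x => g * x * c) fun _ _ hx => rightRel_apply.mpr <| by
    simpa [mul_assoc] using (mem_normalizer_iff.mp hg _).mp (rightRel_apply.mp hx)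

def rightCosetConj (hg : H ≤ centralizer {g}) : Quotient (rightRel H) → G :=
  Quotient.lift (fun y => y⁻¹ * g * y) fun y y' hy => by
    have hc := mem_centralizer_singleton_iff.mp (hg (rightRel_apply.mp hy))
    calc y⁻¹ * g * y = y'⁻¹ * ((y' * y⁻¹) * g) * y := by group
      _ = y'⁻¹ * (g * (y' * y⁻¹)) * y := by rw [hc]
      _ = y'⁻¹ * g * y' := by group

end Subgroup

open Subgroup

section CosetQuandle

variable {G I : Type*} [Group G] (z : I → G) (H : I → Subgroup G)
  (hH : ∀ i, H i ≤ centralizer {z i})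

-- `cosetAct ⟨j, H y⟩ ⟨i, H x⟩` is the paper's `H_i x * H_j y`.
def cosetAct : (Σ i, Quotient (rightRel (H i))) → (Σ i, Quotient (rightRel (H i))) →
    Σ i, Quotient (rightRel (H i))
  | ⟨j, Y⟩, ⟨i, X⟩ => ⟨i, mulRightCosetMul (inv_mem (mem_normalizer_of_le_centralizer (hH i)))
      (rightCosetConj (hH j) Y) X⟩

def cosetInvAct : (Σ i, Quotient (rightRel (H i))) → (Σ i, Quotient (rightRel (H i))) →
    Σ i, Quotient (rightRel (H i))
  | ⟨j, Y⟩, ⟨i, X⟩ => ⟨i, mulRightCosetMul (mem_normalizer_of_le_centralizer (hH i))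
      (rightCosetConj (hH j) Y)⁻¹ X⟩

lemma cosetAct_mk (i j : I) (x y : G) :
    cosetAct z H hH ⟨j, ⟦y⟧⟩ ⟨i, ⟦x⟧⟩ = ⟨i, ⟦(z i)⁻¹ * x * (y⁻¹ * z j * y)⟧⟩ := rfl

lemma cosetInvAct_mk (i j : I) (x y : G) :
    cosetInvAct z H hH ⟨j, ⟦y⟧⟩ ⟨i, ⟦x⟧⟩ = ⟨i, ⟦z i * x * (y⁻¹ * z j * y)⁻¹⟧⟩ := rfl

abbrev cosetQuandle : Quandle (Σ i, Quotient (rightRel (H i))) where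
  act := cosetAct z H hH
  invAct := cosetInvAct z H hH
  self_distrib := by
    rintro ⟨i, x⟩ ⟨j, y⟩ ⟨k, u⟩
    induction x, y, u using Quotient.inductionOn₃
    simp only [cosetAct_mk]
    congr 2
    group
  left_inv := by
    rintro ⟨j, y⟩ ⟨i, x⟩
    induction x, y using Quotient.inductionOn₂
    simp only [cosetAct_mk, cosetInvAct_mk]
    congr 2
    group
  right_inv := by
    rintro ⟨j, y⟩ ⟨i, x⟩
    induction x, y using Quotient.inductionOn₂
    simp only [cosetAct_mk, cosetInvAct_mk]
    congr 2
    group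
  fix := by
    rintro ⟨i, x⟩
    induction x using Quotient.inductionOn
    simp only [cosetAct_mk]
    congr 2
    group

end CosetQuandle

/-- Let `G` be a group, `{z i}_{i ∈ I}` elements of `G` and `{H i}_{i ∈ I}`
subgroups with `H i` contained in the centralizer of `z i`.  Then the disjoint
union `⊔_{i ∈ I} (H i)\G` of the sets of right cosets carries a quandle
structure with `H_i x * H_j y = H_i (z i)⁻¹ x y⁻¹ (z j) y`; in Mathlib's
left-action convention the paper's `a * b` is `b ◃ a`. -/
theorem stmt4 (G : Type*) [Group G] (I : Type*) (z : I → G) (H : I → Subgroup G)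
    (hH : ∀ i, H i ≤ Subgroup.centralizer {z i}) :
    ∃ q : Quandle (Σ i : I, Quotient (QuotientGroup.rightRel (H i))),
      ∀ (i j : I) (x y : G),
        q.act (⟨j, Quotient.mk (QuotientGroup.rightRel (H j)) y⟩ :
            Σ i : I, Quotient (QuotientGroup.rightRel (H i)))
          ⟨i, Quotient.mk (QuotientGroup.rightRel (H i)) x⟩ =
          ⟨i, Quotient.mk (QuotientGroup.rightRel (H i))
            ((z i)⁻¹ * x * y⁻¹ * z j * y)⟩ :=
  ⟨cosetQuandle z H hH, fun i j x y =>
    (cosetAct_mk z H hH i j x y).trans (by simp only [mul_assoc])⟩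
end

section
/- If G is a residually finite group and H is a finite subgroup of G, then H is finitely separable in G. -/
/-!
Since `g ∉ H`, each `g * h⁻¹` with `h ∈ H` is nontrivial, so residual finiteness gives a finite
quotient distinguishing `g` from `h`. There are only finitely many `h`, and the product of these
finitely many maps is again a map to a finite group, distinguishing `g` from all of `H` at once.
-/

/-- A group is residually finite if every nontrivial element has nontrivial
image under some homomorphism to a finite group. -/
def GroupResiduallyFinite (G : Type*) [Group G] : Prop :=
  ∀ g : G, g ≠ 1 → ∃ (F : Type) (_ : Group F) (_ : Finite F) (φ : G →* F),
    φ g ≠ 1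

/-- A subgroup `H` of `G` is finitely separable if every `g ∈ G \ H` can be
separated from `H` by a homomorphism to a finite group. -/
def FinitelySeparable {G : Type*} [Group G] (H : Subgroup G) : Prop :=
  ∀ g : G, g ∉ H → ∃ (F : Type) (_ : Group F) (_ : Finite F) (φ : G →* F),
    φ g ∉ H.map φ

theorem GroupResiduallyFinite.exists_map_ne {G : Type*} [Group G]
    (hG : GroupResiduallyFinite G) {a b : G} (hab : a ≠ b) :
    ∃ (F : Type) (_ : Group F) (_ : Finite F) (φ : G →* F), φ a ≠ φ b := by
  obtain ⟨F, _, _, φ, hφ⟩ := hG (a * b⁻¹) (mul_inv_eq_one.not.mpr hab)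
  refine ⟨F, _, ‹_›, φ, fun h => hφ ?_⟩
  rw [map_mul, map_inv, h, mul_inv_cancel]

theorem exists_map_ne_forall_of_finite {G ι : Type*} [Group G] [Finite ι] {g : G} {x : ι → G}
    (h : ∀ i, ∃ (F : Type) (_ : Group F) (_ : Finite F) (φ : G →* F), φ g ≠ φ (x i)) :
    ∃ (F : Type) (_ : Group F) (_ : Finite F) (φ : G →* F), ∀ i, φ g ≠ φ (x i) := by
  -- Reindex by `Fin n`, so that the product of the finite groups lives in `Type`.
  obtain ⟨n, ⟨e⟩⟩ := Finite.exists_equiv_fin ι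
  choose F _ _ φ hφ using fun j : Fin n => h (e.symm j)
  refine ⟨(j : Fin n) → F j, inferInstance, inferInstance, MonoidHom.pi φ, fun i hi => ?_⟩
  exact hφ (e i) (by simpa using congrFun hi (e i))

/-- If `G` is a residually finite group and `H` is a finite subgroup of `G`,
then `H` is finitely separable in `G`. -/
theorem stmt11 (G : Type*) [Group G] (hG : GroupResiduallyFinite G)
    (H : Subgroup G) (hH : Finite H) : FinitelySeparable H := by
  intro g hg
  have separate_from_each (h : H) :
      ∃ (F : Type) (_ : Group F) (_ : Finite F) (φ : G →* F), φ g ≠ φ h :=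
    hG.exists_map_ne fun hgh => hg (hgh ▸ h.2)
  obtain ⟨F, _, _, φ, hφ⟩ := exists_map_ne_forall_of_finite separate_from_each
  refine ⟨F, _, ‹_›, φ, ?_⟩
  rintro ⟨h, hh, hφh⟩
  exact hφ ⟨h, hh⟩ hφh.symm
end

section
/- Let G be a group, {z_i}_{i∈I} a finite family of elements of G, and {H_i} subgroups with H_i ≤ C_G(z_i) for each i. If each H_i is finitely separable in G, then the quandle ⊔_{i∈I} (G, H_i, z_i) with operation H_i x * H_j y = H_i z_i⁻¹ x y⁻¹ z_j y is residually finite. -/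
/-!
A group homomorphism `ψ : G →* F` induces a quandle homomorphism
`⊔ᵢ (G, H i, z i) → ⊔ᵢ (F, ψ (H i), ψ (z i))`, whose target is finite when `F` is.
The trivial group already separates points of different components. Two distinct points
`H i x ≠ H i y` of one component mean `y * x⁻¹ ∉ H i`, and a finite quotient `ψ` of `G` with
`ψ (y * x⁻¹) ∉ ψ (H i)`, which exists by separability of `H i`, separates their images.
-/

open Quandles

/-- A quandle is residually finite if any two distinct elements can be
separated by a quandle homomorphism to a finite quandle. -/
def QuandleResiduallyFinite (Q : Type*) [Quandle Q] : Prop :=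
  ∀ x y : Q, x ≠ y → ∃ (F : Type) (_ : Quandle F) (_ : Finite F) (φ : Q →◃ F),
    φ x ≠ φ y

universe u v

abbrev Equiv.quandle {α : Type u} {β : Type v} (e : α ≃ β) [Quandle β] : Quandle α where
  act x y := e.symm (e x ◃ e y)
  self_distrib := by
    simp only [Equiv.apply_symm_apply]
    exact congrArg e.symm Shelf.self_distrib
  invAct x y := e.symm (e x ◃⁻¹ e y)
  left_inv x y := by simp only [Equiv.apply_symm_apply, Rack.invAct_act_eq, Equiv.symm_apply_apply]
  right_inv x y := by simp only [Equiv.apply_symm_apply, Rack.act_invAct_eq, Equiv.symm_apply_apply]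
  fix := by simp only [Quandle.fix, Equiv.symm_apply_apply, implies_true]

-- `QuandleResiduallyFinite` asks for targets in `Type`; other finite targets are moved to `Fin n`.
theorem quandleResiduallyFinite_of_forall_ne {Q : Type u} [Quandle Q]
    (h : ∀ x y : Q, x ≠ y →
      ∃ (P : Type v) (_ : Quandle P) (_ : Finite P) (φ : Q →◃ P), φ x ≠ φ y) :
    QuandleResiduallyFinite Q := by
  intro x y hxy
  obtain ⟨P, _, _, φ, hφ⟩ := h x y hxy
  obtain ⟨n, ⟨e⟩⟩ := Finite.exists_equiv_fin P
  let := e.symm.quandle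
  refine ⟨Fin n, inferInstance, inferInstance, ⟨e ∘ φ, ?_⟩, fun h => hφ (e.injective h)⟩
  intro a b
  change e (φ (a ◃ b)) = e (e.symm (e (φ a)) ◃ e.symm (e (φ b)))
  rw [φ.map_act, e.symm_apply_apply, e.symm_apply_apply]

namespace CosetQuandle

variable {G : Type*} [Group G] {I : Type*}

theorem coset_formula_mul_left {a b h k x y : G} (ha : Commute h a) (hb : Commute k b) :
    a⁻¹ * (h * x) * (k * y)⁻¹ * b * (k * y) = h * (a⁻¹ * x * y⁻¹ * b * y) :=
  calc a⁻¹ * (h * x) * (k * y)⁻¹ * b * (k * y)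
      = a⁻¹ * h * x * y⁻¹ * (k⁻¹ * b * k) * y := by group
    _ = h * a⁻¹ * x * y⁻¹ * b * y := by rw [ha.inv_right.eq, hb.inv_mul_cancel]
    _ = h * (a⁻¹ * x * y⁻¹ * b * y) := by group

abbrev SigmaRightCosets (H : I → Subgroup G) : Type _ :=
  Σ i, Quotient (QuotientGroup.rightRel (H i))

@[elab_as_elim]
theorem SigmaRightCosets.ind {H : I → Subgroup G} {p : SigmaRightCosets H → Prop}
    (mk : ∀ i x, p ⟨i, Quotient.mk _ x⟩) (a : SigmaRightCosets H) : p a :=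
  a.casesOn fun i x => Quotient.inductionOn x (mk i)

variable (z : I → G) (H : I → Subgroup G)

def act (hz : ∀ i, ∀ h ∈ H i, Commute h (z i)) (b a : SigmaRightCosets H) :
    SigmaRightCosets H :=
  ⟨a.1, Quotient.map₂ (fun x y => (z a.1)⁻¹ * x * y⁻¹ * z b.1 * y)
    (fun x x' hx y y' hy => by
      replace hx := QuotientGroup.rightRel_apply.mp hx
      replace hy := QuotientGroup.rightRel_apply.mp hy
      have key := coset_formula_mul_left (x := x) (y := y) (hz _ _ hx) (hz _ _ hy)
      rw [inv_mul_cancel_right, inv_mul_cancel_right] at key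
      exact QuotientGroup.rightRel_apply.mpr (by rwa [key, mul_inv_cancel_right])) a.2 b.2⟩

variable {z H} (hz : ∀ i, ∀ h ∈ H i, Commute h (z i))

@[simp]
theorem act_mk (i j : I) (x y : G) :
    act z H hz ⟨j, Quotient.mk _ y⟩ ⟨i, Quotient.mk _ x⟩ =
      ⟨i, Quotient.mk _ ((z i)⁻¹ * x * y⁻¹ * z j * y)⟩ :=
  rfl

abbrev quandle : Quandle (SigmaRightCosets H) where
  act := act z H hz
  self_distrib := by
    intro a b c
    induction a using SigmaRightCosets.ind
    induction b using SigmaRightCosets.ind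
    induction c using SigmaRightCosets.ind
    simp only [act_mk]
    congr 2
    group
  invAct := act z⁻¹ H fun i h hh => (hz i h hh).inv_right
  left_inv := by
    intro a b
    induction a using SigmaRightCosets.ind
    induction b using SigmaRightCosets.ind
    simp only [act_mk, Pi.inv_apply]
    congr 2
    group
  right_inv := by
    intro a b
    induction a using SigmaRightCosets.ind
    induction b using SigmaRightCosets.ind
    simp only [act_mk, Pi.inv_apply]
    congr 2
    group
  fix := by
    intro a
    induction a using SigmaRightCosets.ind
    simp only [act_mk]
    congr 2
    group

theorem eq_act_of_act_mk
    {f : SigmaRightCosets H → SigmaRightCosets H → SigmaRightCosets H}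
    (hf : ∀ (i j : I) (x y : G), f ⟨j, Quotient.mk _ y⟩ ⟨i, Quotient.mk _ x⟩ =
      ⟨i, Quotient.mk _ ((z i)⁻¹ * x * y⁻¹ * z j * y)⟩) :
    f = act z H hz := by
  funext b a
  induction a using SigmaRightCosets.ind
  induction b using SigmaRightCosets.ind
  exact hf _ _ _ _

variable (H) {F : Type*} [Group F]

def map (ψ : G →* F) (a : SigmaRightCosets H) : SigmaRightCosets fun i => (H i).map ψ :=
  ⟨a.1, Quotient.map ψ (fun x x' hx => QuotientGroup.rightRel_apply.mpr (by
    simpa only [map_mul, map_inv] using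
      Subgroup.mem_map_of_mem ψ (QuotientGroup.rightRel_apply.mp hx))) a.2⟩

variable {H}

@[simp]
theorem map_mk (ψ : G →* F) (i : I) (x : G) :
    map H ψ ⟨i, Quotient.mk _ x⟩ = ⟨i, Quotient.mk _ (ψ x)⟩ :=
  rfl

theorem commute_map (hz : ∀ i, ∀ h ∈ H i, Commute h (z i)) (ψ : G →* F) :
    ∀ i, ∀ h ∈ (H i).map ψ, Commute h (ψ (z i)) := by
  rintro i _ ⟨h, hh, rfl⟩
  exact (hz i h hh).map ψ

theorem map_act (ψ : G →* F) (b a : SigmaRightCosets H) :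
    map H ψ (act z H hz b a) =
      act (fun i => ψ (z i)) _ (commute_map hz ψ) (map H ψ b) (map H ψ a) := by
  induction a using SigmaRightCosets.ind
  induction b using SigmaRightCosets.ind
  simp only [act_mk, map_mk, map_mul, map_inv]

theorem exists_map_ne (hsep : ∀ i, FinitelySeparable (H i)) {a b : SigmaRightCosets H}
    (hab : a ≠ b) :
    ∃ (F : Type) (_ : Group F) (_ : Finite F) (ψ : G →* F), map H ψ a ≠ map H ψ b := by
  induction a using SigmaRightCosets.ind with | mk i x =>
  induction b using SigmaRightCosets.ind with | mk j y =>
  by_cases hij : i = j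
  · subst hij
    have hxy : y * x⁻¹ ∉ H i := fun h =>
      hab (congrArg _ (Quotient.sound (QuotientGroup.rightRel_apply.mpr h)))
    obtain ⟨F, _, _, ψ, hψ⟩ := hsep i _ hxy
    refine ⟨F, inferInstance, inferInstance, ψ, fun h => hψ ?_⟩
    rw [map_mk, map_mk] at h
    have h' := Quotient.exact (eq_of_heq (Sigma.mk.inj_iff.mp h).2)
    simpa only [map_mul, map_inv] using QuotientGroup.rightRel_apply.mp h'
  · exact ⟨PUnit, inferInstance, inferInstance, 1, fun h => hij (congrArg Sigma.fst h)⟩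

end CosetQuandle

/-- Let `G` be a group, `{z i}` a finite family of elements and `{H i}`
subgroups with `H i ≤ C_G(z i)`.  If each `H i` is finitely separable in `G`,
then the quandle `⊔ᵢ (G, H i, z i)` — the disjoint union of the right coset
spaces `(H i)\G` with `H_i x * H_j y = H_i (z i)⁻¹ x y⁻¹ (z j) y` (the paper's
`a * b` being `b ◃ a` in Mathlib's left-action convention) — is residually
finite. -/
theorem stmt12 (G : Type*) [Group G] (I : Type*) [Finite I] (z : I → G)
    (H : I → Subgroup G) (hH : ∀ i, H i ≤ Subgroup.centralizer {z i})
    (hsep : ∀ i, FinitelySeparable (H i))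
    (q : Quandle (Σ i : I, Quotient (QuotientGroup.rightRel (H i))))
    (hq : ∀ (i j : I) (x y : G),
      q.act (⟨j, Quotient.mk (QuotientGroup.rightRel (H j)) y⟩ :
          Σ i : I, Quotient (QuotientGroup.rightRel (H i)))
        ⟨i, Quotient.mk (QuotientGroup.rightRel (H i)) x⟩ =
        ⟨i, Quotient.mk (QuotientGroup.rightRel (H i))
          ((z i)⁻¹ * x * y⁻¹ * z j * y)⟩) :
    @QuandleResiduallyFinite _ q := by
  have hz : ∀ i, ∀ h ∈ H i, Commute h (z i) := fun i h hh =>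
    Subgroup.mem_centralizer_singleton_iff.mp (hH i hh)
  have hact : q.act = CosetQuandle.act z H hz := CosetQuandle.eq_act_of_act_mk hz hq
  refine @quandleResiduallyFinite_of_forall_ne _ q fun a b hab => ?_
  obtain ⟨F, _, _, ψ, hψ⟩ := CosetQuandle.exists_map_ne hsep hab
  let := CosetQuandle.quandle (CosetQuandle.commute_map hz ψ)
  refine ⟨_, inferInstance, inferInstance, ⟨CosetQuandle.map H ψ, fun {b a} => ?_⟩, hψ⟩
  rw [hact]
  exact CosetQuandle.map_act hz ψ b a
end

section
/- If G and H are residually finite groups, then their free product G ⋆ H is residually finite. -/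
open Function

section ExtendPerm

open scoped Classical

variable {F Ω K : Type*} [Group F]

noncomputable def sigFun (P Q : K → Ω) (J : K × F → Ω) (c : K → F) : Ω → Ω := fun x =>
  if h : ∃ k, P k = x then J (h.choose, 1)
  else if h : ∃ k, Q k = x then J (h.choose, c h.choose)
  else if h : ∃ kf, J kf = x then
    (if h.choose.2 = 1 then P h.choose.1
     else if h.choose.2 = c h.choose.1 then Q h.choose.1 else x)
  else x

noncomputable def nuFun (J : K × F → Ω) (g : F) : Ω → Ω := fun x =>
  if h : ∃ kf, J kf = x then J (h.choose.1, g * h.choose.2) else x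

variable {P Q : K → Ω} {J : K × F → Ω} {c : K → F}
variable (hP : Injective P) (hQ : Injective Q) (hJ : Injective J)
variable (hPQ : ∀ k k', P k ≠ Q k') (hPJ : ∀ k kf, P k ≠ J kf) (hQJ : ∀ k kf, Q k ≠ J kf)
variable (hc : ∀ k, c k ≠ 1)

set_option linter.unusedSectionVars false

include hP in
theorem sigFun_P (k : K) : sigFun P Q J c (P k) = J (k, 1) := by
  have h : ∃ k', P k' = P k := ⟨k, rfl⟩
  rw [sigFun, dif_pos h, hP h.choose_spec]

include hQ hPQ in
theorem sigFun_Q (k : K) : sigFun P Q J c (Q k) = J (k, c k) := by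
  have h0 : ¬ ∃ k', P k' = Q k := by rintro ⟨k', hk'⟩; exact hPQ k' k hk'
  have h : ∃ k', Q k' = Q k := ⟨k, rfl⟩
  rw [sigFun, dif_neg h0, dif_pos h, hQ h.choose_spec]

include hJ hPJ hQJ in
theorem sigFun_J (k : K) (y : F) : sigFun P Q J c (J (k, y)) =
    (if y = 1 then P k else if y = c k then Q k else J (k, y)) := by
  have h0 : ¬ ∃ k', P k' = J (k, y) := by rintro ⟨k', hk'⟩; exact hPJ k' _ hk'
  have h1 : ¬ ∃ k', Q k' = J (k, y) := by rintro ⟨k', hk'⟩; exact hQJ k' _ hk'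
  have h : ∃ kf, J kf = J (k, y) := ⟨(k, y), rfl⟩
  have he : h.choose = (k, y) := hJ h.choose_spec
  rw [sigFun, dif_neg h0, dif_neg h1, dif_pos h, he]

theorem sigFun_other {x : Ω} (h0 : ¬ ∃ k, P k = x) (h1 : ¬ ∃ k, Q k = x)
    (h2 : ¬ ∃ kf, J kf = x) : sigFun P Q J c x = x := by
  rw [sigFun, dif_neg h0, dif_neg h1, dif_neg h2]

include hP hQ hJ hPQ hPJ hQJ hc in
theorem sigFun_invol : Involutive (sigFun P Q J c) := by
  intro x
  by_cases h0 : ∃ k, P k = x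
  · obtain ⟨k, rfl⟩ := h0
    rw [sigFun_P hP, sigFun_J hJ hPJ hQJ, if_pos rfl]
  by_cases h1 : ∃ k, Q k = x
  · obtain ⟨k, rfl⟩ := h1
    rw [sigFun_Q hQ hPQ, sigFun_J hJ hPJ hQJ, if_neg (hc k), if_pos rfl]
  by_cases h2 : ∃ kf, J kf = x
  · obtain ⟨⟨k, y⟩, rfl⟩ := h2
    rw [sigFun_J hJ hPJ hQJ]
    by_cases hy1 : y = 1
    · subst hy1; rw [if_pos rfl, sigFun_P hP]
    by_cases hyc : y = c k
    · subst hyc; rw [if_neg hy1, if_pos rfl, sigFun_Q hQ hPQ]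
    · rw [if_neg hy1, if_neg hyc, sigFun_J hJ hPJ hQJ, if_neg hy1, if_neg hyc]
  · rw [sigFun_other h0 h1 h2, sigFun_other h0 h1 h2]

include hJ in
theorem nuFun_J (g : F) (k : K) (y : F) : nuFun J g (J (k, y)) = J (k, g * y) := by
  have h : ∃ kf, J kf = J (k, y) := ⟨(k, y), rfl⟩
  have he : h.choose = (k, y) := hJ h.choose_spec
  rw [nuFun, dif_pos h, he]

include hJ in
theorem nuFun_comp (g g' : F) (x : Ω) : nuFun J g (nuFun J g' x) = nuFun J (g * g') x := by
  by_cases h : ∃ kf, J kf = x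
  · obtain ⟨⟨k, y⟩, rfl⟩ := h
    rw [nuFun_J hJ, nuFun_J hJ, nuFun_J hJ, mul_assoc]
  · rw [nuFun, nuFun, nuFun, dif_neg h, dif_neg h, dif_neg h]

include hJ in
theorem nuFun_one (x : Ω) : nuFun J 1 x = x := by
  by_cases h : ∃ kf, J kf = x
  · obtain ⟨⟨k, y⟩, rfl⟩ := h
    rw [nuFun_J hJ, one_mul]
  · rw [nuFun, dif_neg h]

include hP hQ hJ hPQ hPJ hQJ hc in
theorem extend_perm : ∃ φ : F →* Equiv.Perm Ω, ∀ k, φ (c k) (P k) = Q k := by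
  have hinv : ∀ y : Ω, sigFun P Q J c (sigFun P Q J c y) = y :=
    sigFun_invol hP hQ hJ hPQ hPJ hQJ hc
  refine ⟨MonoidHom.mk' (fun g =>
    ⟨fun x => sigFun P Q J c (nuFun J g (sigFun P Q J c x)),
     fun x => sigFun P Q J c (nuFun J g⁻¹ (sigFun P Q J c x)),
      fun x => by simp only [hinv, nuFun_comp hJ, inv_mul_cancel, nuFun_one hJ],
      fun x => by simp only [hinv, nuFun_comp hJ, mul_inv_cancel, nuFun_one hJ]⟩)
    (fun g g' => by
      ext x
      simp only [Equiv.coe_fn_mk, Equiv.Perm.mul_apply, hinv, nuFun_comp hJ]), ?_⟩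
  intro k
  show sigFun P Q J c (nuFun J (c k) (sigFun P Q J c (P k))) = Q k
  rw [sigFun_P hP, nuFun_J hJ, mul_one, sigFun_J hJ hPJ hQJ,
    if_neg (hc k), if_pos rfl]

end ExtendPerm

theorem rf_list {G : Type*} [Group G] (hG : GroupResiduallyFinite G) (l : List G) :
    ∃ (F : Type) (_ : Group F) (_ : Finite F) (φ : G →* F),
      ∀ m ∈ l, m ≠ 1 → φ m ≠ 1 := by
  induction l with
  | nil => exact ⟨PUnit, inferInstance, inferInstance, 1, by simp⟩
  | cons a l ih =>
    obtain ⟨F1, _, _, φ1, h1⟩ := ih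
    by_cases ha : a = 1
    · refine ⟨F1, ‹_›, ‹_›, φ1, ?_⟩
      intro m hm
      rcases List.mem_cons.1 hm with rfl | hm
      · exact fun h => absurd ha h
      · exact h1 m hm
    obtain ⟨F2, _, _, φ2, h2⟩ := hG a ha
    refine ⟨F1 × F2, inferInstance, inferInstance, φ1.prod φ2, ?_⟩
    intro m hm hm1
    rcases List.mem_cons.1 hm with rfl | hm
    · exact fun h => h2 (by simpa using congrArg Prod.snd h)
    · exact fun h => h1 m hm hm1 (by simpa using congrArg Prod.fst h)

open Monoid

theorem coprodI_rf {M : Bool → Type*} [∀ b, Group (M b)]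
    (hM : ∀ b, GroupResiduallyFinite (M b)) :
    GroupResiduallyFinite (CoprodI M) := by
  classical
  intro x hx
  set w : CoprodI.Word M := CoprodI.Word.equiv x with hw
  have hprodw : w.prod = x := CoprodI.Word.equiv.symm_apply_apply x
  set L : List (Σ b, M b) := w.toList with hLdef
  have hL : L ≠ [] := by
    intro h
    apply hx
    rw [← hprodw]
    have : w = CoprodI.Word.empty := CoprodI.Word.ext h
    rw [this, CoprodI.Word.prod_empty]
  set n : ℕ := L.length with hn
  have hnpos : 0 < n := List.length_pos_iff.2 hL
  have hchainL : L.Chain' (fun l l' => l.1 ≠ l'.1) := w.chain_ne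
  have hneL : ∀ l ∈ L, l.2 ≠ 1 := w.ne_one
  -- choose finite quotients for each factor keeping all letters alive
  have hhom : ∀ b : Bool, ∃ (F : Type) (_ : Group F) (_ : Finite F) (φ : M b →* F),
      ∀ m : M b, (⟨b, m⟩ : Σ b, M b) ∈ L → m ≠ 1 → φ m ≠ 1 := by
    intro b
    have hrf := rf_list (hM b)
      (L.map (fun l => if h : l.1 = b then cast (congrArg M h) l.2 else 1))
    obtain ⟨F, _, _, φ, hφ⟩ := hrf
    refine ⟨F, ‹_›, ‹_›, φ, fun m hm hm1 => hφ m ?_ hm1⟩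
    refine List.mem_map.2 ⟨⟨b, m⟩, hm, ?_⟩
    rw [dif_pos rfl]
    rfl
  choose F instG instF φ hφ using hhom
  letI : ∀ b, Group (F b) := instG
  letI : ∀ b, Finite (F b) := instF
  set idx : Fin n → Bool := fun k => (L.get k).1 with hidx
  set elt : ∀ k : Fin n, M (idx k) := fun k => (L.get k).2 with helt
  have hne1 : ∀ k : Fin n, elt k ≠ 1 := fun k => hneL (L.get k) (List.get_mem L k)
  have hchain : ∀ (i : ℕ) (h : i + 1 < n),
      idx ⟨i, by omega⟩ ≠ idx ⟨i + 1, h⟩ := by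
    intro i h
    exact List.isChain_iff_getElem.1 hchainL i (by omega)
  -- the finite permutation set
  set Ω : Type := Fin (n + 1) ⊕ (Fin n × Σ b, F b) with hΩ
  have key : ∀ b : Bool, ∃ ψ : F b →* Equiv.Perm Ω,
      ∀ p : {k : Fin n // idx k = b},
        ψ (φ b (p.2 ▸ elt p.1)) (Sum.inl p.1.succ) = Sum.inl p.1.castSucc := by
    intro b
    refine extend_perm (P := fun p : {k : Fin n // idx k = b} => Sum.inl p.1.succ)
      (Q := fun p => Sum.inl p.1.castSucc)
      (J := fun pf => Sum.inr (pf.1.1, ⟨b, pf.2⟩))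
      (c := fun p => φ b (p.2 ▸ elt p.1)) ?_ ?_ ?_ ?_ ?_ ?_ ?_
    · rintro ⟨k, hk⟩ ⟨k', hk'⟩ h
      simp only [Sum.inl.injEq] at h
      exact Subtype.ext (Fin.succ_injective _ h)
    · rintro ⟨k, hk⟩ ⟨k', hk'⟩ h
      simp only [Sum.inl.injEq] at h
      exact Subtype.ext (Fin.castSucc_injective _ h)
    · rintro ⟨⟨k, hk⟩, y⟩ ⟨⟨k', hk'⟩, y'⟩ h
      simp only [Sum.inr.injEq, Prod.mk.injEq] at h
      obtain ⟨h1, h2⟩ := h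
      obtain rfl : k = k' := h1
      obtain rfl : y = y' := sigma_mk_injective h2
      rfl
    · rintro ⟨k, hk⟩ ⟨k', hk'⟩ h
      simp only [Sum.inl.injEq] at h
      have hkk' : (k : ℕ) + 1 = (k' : ℕ) := by
        simpa [Fin.ext_iff] using h
      have h1 : (k : ℕ) + 1 < n := hkk' ▸ k'.isLt
      apply hchain k h1
      · rw [show (⟨(k : ℕ), by omega⟩ : Fin n) = k from Fin.ext rfl, hk]
        rw [show (⟨(k : ℕ) + 1, h1⟩ : Fin n) = k' from Fin.ext hkk', hk']
    · rintro p pf h; exact Sum.inl_ne_inr h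
    · rintro p pf h; exact Sum.inl_ne_inr h
    · rintro ⟨k, hk⟩
      subst hk
      show φ (idx k) (elt k) ≠ 1
      refine hφ _ _ ?_ (hne1 k)
      have : (⟨idx k, elt k⟩ : Σ b, M b) = L.get k := rfl
      rw [this]
      exact List.get_mem L k
  choose ψ hψ using key
  set Φ : CoprodI M →* Equiv.Perm Ω := CoprodI.lift (fun b => (ψ b).comp (φ b)) with hΦ
  have main : ∀ (d j : ℕ) (hjd : j + d = n),
      (((L.drop j).map (fun l => Φ (CoprodI.of l.2))).prod : Equiv.Perm Ω)
          (Sum.inl (Fin.last n)) = Sum.inl ⟨j, by omega⟩ := by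
    intro d
    induction d with
    | zero =>
      intro j hj
      obtain rfl : j = n := by omega
      rw [show L.drop n = [] from List.drop_length (l := L)]
      simp [Fin.last]
    | succ d ih =>
      intro j hj
      have hjn : j < n := by omega
      rw [← List.cons_get_drop_succ (l := L) (n := ⟨j, hjn⟩), List.map_cons,
        List.prod_cons, Equiv.Perm.mul_apply, ih (j + 1) (by omega)]
      have hkey := hψ (idx ⟨j, hjn⟩) ⟨⟨j, hjn⟩, rfl⟩
      have h2 : Φ (CoprodI.of (L.get ⟨j, hjn⟩).2)
          = ψ (idx ⟨j, hjn⟩) (φ (idx ⟨j, hjn⟩) (elt ⟨j, hjn⟩)) := by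
        rw [hΦ, CoprodI.lift_of]; rfl
      rw [h2]
      simpa [Fin.succ, Fin.castSucc, Fin.castAdd, Fin.castLE] using hkey
  have hΦx : Φ x (Sum.inl (Fin.last n)) = Sum.inl ⟨0, by omega⟩ := by
    have hx' : Φ x = ((L.map (fun l => Φ (CoprodI.of l.2))).prod) := by
      conv_lhs => rw [← hprodw]
      rw [CoprodI.Word.prod, map_list_prod, List.map_map]
      rfl
    rw [hx']
    simpa using main n 0 (by omega)
  refine ⟨Equiv.Perm Ω, inferInstance, ?_, Φ, ?_⟩
  · infer_instance
  · intro h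
    rw [h] at hΦx
    simp only [Equiv.Perm.coe_one, id_eq] at hΦx
    have h2 : Fin.last n = ⟨0, by omega⟩ := Sum.inl_injective hΦx
    have h3 : n = 0 := by simpa [Fin.last, Fin.ext_iff] using h2
    omega

theorem rf_of_injective {G' G : Type*} [Group G'] [Group G] (e : G' →* G)
    (he : Function.Injective e) (h : GroupResiduallyFinite G) :
    GroupResiduallyFinite G' := by
  intro g hg
  have hg' : e g ≠ 1 := fun h1 => hg (he (by simpa using h1))
  obtain ⟨F, _, _, φ, hφ⟩ := h (e g) hg'
  exact ⟨F, ‹_›, ‹_›, φ.comp e, hφ⟩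

universe u v

theorem coprod_rf_aux {G : Type u} {H : Type v} [Group G] [Group H]
    (hG : GroupResiduallyFinite G) (hH : GroupResiduallyFinite H) :
    GroupResiduallyFinite (Monoid.Coprod G H) := by
  classical
  let M : Bool → Type (max u v) := fun b => cond b (ULift.{v} G) (ULift.{u} H)
  letI : ∀ b, Group (M b) := fun b => match b with
    | true => (ULift.group : Group (ULift.{v} G))
    | false => (ULift.group : Group (ULift.{u} H))
  have hMrf : ∀ b, GroupResiduallyFinite (M b) := fun b => match b with
    | true => rf_of_injective ((MulEquiv.ulift : ULift.{v} G ≃* G).toMonoidHom)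
        (fun a b hab => (MulEquiv.ulift : ULift.{v} G ≃* G).injective hab) hG
    | false => rf_of_injective ((MulEquiv.ulift : ULift.{u} H ≃* H).toMonoidHom)
        (fun a b hab => (MulEquiv.ulift : ULift.{u} H ≃* H).injective hab) hH
  have hrf : GroupResiduallyFinite (CoprodI M) := coprodI_rf hMrf
  let e : Monoid.Coprod G H →* CoprodI M :=
    Monoid.Coprod.lift
      ((CoprodI.of (i := true)).comp ((MulEquiv.ulift.symm : G ≃* ULift G).toMonoidHom))
      ((CoprodI.of (i := false)).comp ((MulEquiv.ulift.symm : H ≃* ULift H).toMonoidHom))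
  let r : CoprodI M →* Monoid.Coprod G H :=
    CoprodI.lift (fun b => Bool.rec
      ((Monoid.Coprod.inr (M := G) (N := H)).comp
        ((MulEquiv.ulift : ULift H ≃* H).toMonoidHom))
      ((Monoid.Coprod.inl (M := G) (N := H)).comp
        ((MulEquiv.ulift : ULift G ≃* G).toMonoidHom)) b)
  have hre : ∀ y, r (e y) = y := by
    have hcomp : r.comp e = MonoidHom.id _ := by
      refine Monoid.Coprod.hom_ext ?_ ?_
      · ext g
        simp [e, r, Monoid.Coprod.lift_apply_inl, CoprodI.lift_of,
          MulEquiv.apply_symm_apply]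
      · ext h
        simp [e, r, Monoid.Coprod.lift_apply_inr, CoprodI.lift_of,
          MulEquiv.apply_symm_apply]
    exact fun y => DFunLike.congr_fun hcomp y
  exact rf_of_injective e (Function.LeftInverse.injective hre) hrf

/-- A free product of two residually finite groups is residually finite. -/
theorem stmt14 (G H : Type*) [Group G] [Group H]
    (hG : GroupResiduallyFinite G) (hH : GroupResiduallyFinite H) :
    GroupResiduallyFinite (Monoid.Coprod G H) := by
  exact coprod_rf_aux hG hH
end

section
/- If X is a finite quandle, then its associated group As(X) is residually finite. -/
open Quandles

/-- Relations of the associated group `As X`: the paper's relation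
`e_{x*y} = e_y⁻¹ e_x e_y`, with the paper's `x * y` written `y ◃ x` in Mathlib's
left-action convention. -/
def asRels (X : Type*) [Quandle X] : Set (FreeGroup X) :=
  {r | ∃ x y : X,
    r = FreeGroup.of (y ◃ x) * (FreeGroup.of y)⁻¹ * (FreeGroup.of x)⁻¹ * FreeGroup.of y}

/-- The associated (enveloping) group of a quandle. -/
def As (X : Type*) [Quandle X] := PresentedGroup (asRels X)

instance (X : Type*) [Quandle X] : Group (As X) :=
  inferInstanceAs (Group (PresentedGroup _))

/-- The natural map `η : X → As X`, `x ↦ e_x`. -/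
def eta (X : Type*) [Quandle X] : X → As X := fun x => PresentedGroup.of x

section Aux

variable {X : Type*} [Quandle X]

lemma closure_eta (X : Type*) [Quandle X] :
    Subgroup.closure (Set.range (eta X)) = (⊤ : Subgroup (As X)) :=
  PresentedGroup.closure_range_of (asRels X)

/-- The permutation representation of `As X` on `X`, sending `e_x` to `(act' x)⁻¹`. -/
def asPerm (X : Type*) [Quandle X] : As X →* Equiv.Perm X :=
  PresentedGroup.toGroup (f := fun x => (Rack.act' x)⁻¹) (by
    rintro r ⟨x, y, rfl⟩
    simp only [map_mul, map_inv, FreeGroup.lift_apply_of]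
    rw [Rack.ad_conj y x]
    group)

@[simp] lemma asPerm_eta (y : X) : asPerm X (eta X y) = (Rack.act' y)⁻¹ :=
  PresentedGroup.toGroup.of _

lemma eta_rel (x y : X) : eta X (y ◃ x) = (eta X y)⁻¹ * eta X x * eta X y := by
  have h' : eta X (y ◃ x) * (eta X y)⁻¹ * (eta X x)⁻¹ * eta X y = 1 := by
    show ((QuotientGroup.mk (FreeGroup.of (y ◃ x) * (FreeGroup.of y)⁻¹ *
        (FreeGroup.of x)⁻¹ * FreeGroup.of y) : PresentedGroup (asRels X))) = 1
    rw [QuotientGroup.eq_one_iff]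
    exact Subgroup.subset_normalClosure ⟨x, y, rfl⟩
  calc eta X (y ◃ x)
      = (eta X (y ◃ x) * (eta X y)⁻¹ * (eta X x)⁻¹ * eta X y) *
        ((eta X y)⁻¹ * eta X x * eta X y) := by group
    _ = (eta X y)⁻¹ * eta X x * eta X y := by rw [h']; group

lemma conj_eta (g : As X) (x : X) :
    g⁻¹ * eta X x * g = eta X (((asPerm X g)⁻¹ : Equiv.Perm X) x) := by
  have key : ∀ g ∈ Subgroup.closure (Set.range (eta X)),
      ∀ x : X, g⁻¹ * eta X x * g = eta X (((asPerm X g)⁻¹ : Equiv.Perm X) x) := by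
    intro g hg
    induction hg using Subgroup.closure_induction with
    | mem a ha =>
      obtain ⟨y, rfl⟩ := ha
      intro x
      have h1 : ((asPerm X (eta X y))⁻¹ : Equiv.Perm X) x = y ◃ x := by simp
      rw [h1, eta_rel]
    | one => intro x; simp
    | mul a b _ _ ha hb =>
      intro x
      have h1 : (a * b)⁻¹ * eta X x * (a * b) = b⁻¹ * (a⁻¹ * eta X x * a) * b := by group
      rw [h1, ha, hb]
      simp [mul_comm]
    | inv a _ ha =>
      intro x
      have h := ha (((asPerm X a) : Equiv.Perm X) x)
      have h2 : ((asPerm X a)⁻¹ : Equiv.Perm X) ((asPerm X a) x) = x := by simp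
      rw [h2] at h
      rw [← h]
      group
      simp
  exact key g (by rw [closure_eta]; trivial) x

lemma ker_le_center : (asPerm X).ker ≤ Subgroup.center (As X) := by
  intro g hg
  rw [Subgroup.mem_center_iff]
  have hfix : ∀ x : X, g⁻¹ * eta X x * g = eta X x := by
    intro x
    rw [conj_eta]
    rw [MonoidHom.mem_ker] at hg
    simp [hg]
  have comm : ∀ h ∈ Subgroup.closure (Set.range (eta X)), h * g = g * h := by
    intro h hh
    induction hh using Subgroup.closure_induction with
    | mem a ha =>
      obtain ⟨y, rfl⟩ := ha
      calc eta X y * g = g * (g⁻¹ * eta X y * g) := by group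
      _ = g * eta X y := by rw [hfix y]
    | one => simp
    | mul a b _ _ ha hb => rw [mul_assoc, hb, ← mul_assoc, ha, mul_assoc]
    | inv a _ ha =>
      calc a⁻¹ * g = a⁻¹ * (g * a) * a⁻¹ := by group
      _ = a⁻¹ * (a * g) * a⁻¹ := by rw [← ha]
      _ = g * a⁻¹ := by group
  intro h
  exact comm h (by rw [closure_eta]; trivial)

/-- Residual finiteness for finitely generated additive commutative groups. -/
lemma addres {A : Type*} [AddCommGroup A] [AddGroup.FG A] (a : A) (ha : a ≠ 0) :
    ∃ (F : Type) (_ : AddCommGroup F) (_ : Finite F) (φ : A →+ F), φ a ≠ 0 := by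
  obtain ⟨n, ι, fι, p, hp, e, ⟨f⟩⟩ := AddCommGroup.equiv_free_prod_directSum_zmod A
  have hb : f a ≠ 0 := by
    intro h
    exact ha (f.injective (by simpa using h))
  by_cases h2 : (f a).2 = 0
  · -- first component nonzero
    have h1 : (f a).1 ≠ 0 := by
      intro h1
      exact hb (Prod.ext h1 h2)
    obtain ⟨i, hi⟩ : ∃ i, (f a).1 i ≠ 0 := by
      by_contra hc
      push_neg at hc
      exact h1 (Finsupp.ext hc)
    set k : ℤ := (f a).1 i with hk
    refine ⟨ZMod (k.natAbs + 1), inferInstance, inferInstance,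
      ((Int.castAddHom (ZMod (k.natAbs + 1))).comp
        ((Finsupp.applyAddHom i).comp
          ((AddMonoidHom.fst _ _).comp f.toAddMonoidHom))), ?_⟩
    simp only [AddMonoidHom.coe_comp, Function.comp_apply, AddEquiv.coe_toAddMonoidHom,
      AddMonoidHom.coe_fst, Finsupp.applyAddHom_apply, Int.coe_castAddHom]
    rw [← hk]
    intro hzero
    rw [ZMod.intCast_zmod_eq_zero_iff_dvd] at hzero
    have hdvd : ((k.natAbs + 1 : ℕ) : ℤ) ∣ |k| := (dvd_abs _ _).mpr hzero
    have hpos : 0 < |k| := abs_pos.mpr hi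
    have hle := Int.le_of_dvd hpos hdvd
    rw [Int.abs_eq_natAbs] at hle
    omega
  · -- torsion component nonzero
    obtain ⟨i, hi⟩ : ∃ i, (f a).2 i ≠ 0 := by
      by_contra hc
      push_neg at hc
      exact h2 (DFinsupp.ext hc)
    haveI : NeZero (p i ^ e i) := ⟨pow_ne_zero _ (hp i).pos.ne'⟩
    refine ⟨ZMod (p i ^ e i), inferInstance, inferInstance,
      ((DFinsupp.evalAddMonoidHom i).comp
        ((AddMonoidHom.snd _ _).comp f.toAddMonoidHom)), ?_⟩
    exact hi

/-- Every finite group admits an injective hom to a finite group in `Type 0`. -/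
lemma exists_type0 {G : Type*} [Group G] [Finite G] :
    ∃ (F : Type) (_ : Group F) (_ : Finite F) (i : G →* F), Function.Injective i := by
  haveI : Small.{0} G := Countable.toSmall G
  refine ⟨Shrink.{0} G, inferInstance, Finite.of_equiv G (equivShrink G),
    (Shrink.mulEquiv.symm : G ≃* Shrink.{0} G).toMonoidHom, ?_⟩
  exact (Shrink.mulEquiv.symm : G ≃* Shrink.{0} G).injective

end Aux

/-- If `X` is a finite quandle, then its associated group `As X` is a
residually finite group. -/
theorem stmt18 (X : Type*) [Quandle X] [Finite X] :
    GroupResiduallyFinite (As X) := by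
  classical
  intro g hg
  haveI : Group.FG (As X) :=
    Group.fg_iff.mpr ⟨Set.range (eta X), closure_eta X, Set.finite_range _⟩
  by_cases hψ : asPerm X g = 1
  · -- `g` is central
    have hgc : g ∈ Subgroup.center (As X) := ker_le_center (MonoidHom.mem_ker.mpr hψ)
    set Z := Subgroup.center (As X) with hZ
    letI : CommGroup Z := { (inferInstance : Group Z) with
      mul_comm := fun a b => Subtype.ext ((Subgroup.mem_center_iff.mp b.2) a) }
    haveI : Z.FiniteIndex := Subgroup.finiteIndex_of_le ker_le_center
    haveI : Group.FG Z := Subgroup.fg_of_index_ne_zero Z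
    haveI : AddGroup.FG (Additive Z) := GroupFG.iff_add_fg.mp inferInstance
    set zg : Z := ⟨g, hgc⟩ with hzg
    have hzg1 : (Additive.ofMul zg : Additive Z) ≠ 0 := by
      intro h
      apply hg
      have h1 : zg = 1 := h
      simpa [hzg, Subtype.ext_iff] using h1
    obtain ⟨F0, _, _, φ0, hφ0⟩ := addres (Additive.ofMul zg) hzg1
    set χ : Z →* Multiplicative F0 := AddMonoidHom.toMultiplicativeRight φ0 with hχ
    have hχg : χ zg ≠ 1 := by
      simp only [hχ, AddMonoidHom.toMultiplicativeRight_apply_apply]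
      intro h
      exact hφ0 h
    set K' : Subgroup (As X) := (χ.ker).map Z.subtype with hK'
    have hle : K' ≤ Z := Subgroup.map_subtype_le _
    haveI hnormal : K'.Normal := by
      constructor
      intro n hn b
      have hnc : n ∈ Z := hle hn
      have heq : b * n * b⁻¹ = n := by
        have hc := (Subgroup.mem_center_iff.mp hnc) b⁻¹
        calc b * n * b⁻¹ = b * (n * b⁻¹) := by group
        _ = b * (b⁻¹ * n) := by rw [← hc]
        _ = n := by group
      rwa [heq]
    haveI : Finite (Multiplicative F0) := ‹Finite F0›
    haveI : Finite (χ.range) := inferInstance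
    haveI hKfi : χ.ker.FiniteIndex := Subgroup.finiteIndex_ker χ
    haveI : K'.FiniteIndex := by
      constructor
      have heq := Subgroup.relIndex_mul_index hle
      have hrel : K'.relIndex Z = χ.ker.index := by
        rw [hK', Subgroup.relIndex, Subgroup.subgroupOf,
          Subgroup.comap_map_eq_self_of_injective Z.subtype_injective]
      intro h
      rw [h] at heq
      rcases Nat.mul_eq_zero.mp heq with h' | h'
      · rw [hrel] at h'; exact hKfi.index_ne_zero h'
      · exact Subgroup.FiniteIndex.index_ne_zero (H := Z) h'
    haveI : Finite (As X ⧸ K') := Subgroup.finite_quotient_of_finiteIndex (H := K')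
    obtain ⟨F, _, _, i, hi⟩ := exists_type0 (G := As X ⧸ K')
    refine ⟨F, ‹_›, ‹_›, i.comp (QuotientGroup.mk' K'), ?_⟩
    intro h
    have hmk : (QuotientGroup.mk' K') g = 1 := by
      apply hi
      simpa using h
    rw [QuotientGroup.mk'_apply, QuotientGroup.eq_one_iff] at hmk
    obtain ⟨z, hz, hz'⟩ := hmk
    have hzz : z = zg := Subtype.ext hz'
    rw [hzz] at hz
    exact hχg hz
  · -- `asPerm g ≠ 1` : use the finite permutation group
    obtain ⟨F, _, _, i, hi⟩ := exists_type0 (G := Equiv.Perm X)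
    refine ⟨F, ‹_›, ‹_›, i.comp (asPerm X), ?_⟩
    intro h
    apply hψ
    apply hi
    simpa using h
end

section
/- If G is a group and N is a normal subgroup of finite index in G that is residually finite, then G is residually finite. -/
/-- Helper: any finite-index subgroup's normal core gives a finite quotient
that detects elements outside the subgroup. -/
noncomputable def quotHom {G : Type*} [Group G] (H : Subgroup G) [H.FiniteIndex] :
    G →* Shrink.{0} (G ⧸ H.normalCore) :=
  (Shrink.mulEquiv.symm.toMonoidHom).comp (QuotientGroup.mk' H.normalCore)

lemma quotHom_ne_one {G : Type*} [Group G] (H : Subgroup G) [H.FiniteIndex] {g : G} (hg : g ∉ H) :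
    quotHom H g ≠ 1 := by
  intro h
  apply hg
  have h1 : (QuotientGroup.mk' H.normalCore) g = 1 := by
    have := congrArg Shrink.mulEquiv h
    simpa [quotHom] using this
  rw [QuotientGroup.mk'_apply, QuotientGroup.eq_one_iff] at h1
  exact H.normalCore_le h1

/-- If `N` is a normal subgroup of finite index in `G` and `N` is residually
finite, then `G` is residually finite. -/
theorem stmt19 (G : Type*) [Group G] (N : Subgroup G) [N.Normal]
    [N.FiniteIndex] (hN : GroupResiduallyFinite N) :
    GroupResiduallyFinite G := by
  intro g hg
  by_cases hgN : g ∈ N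
  · obtain ⟨F, _, _, φ, hφ⟩ := hN ⟨g, hgN⟩ (by
      simp only [ne_eq, Subgroup.mk_eq_one]
      exact hg)
    set K : Subgroup G := φ.ker.map N.subtype with hK
    have hKN : K ≤ N := by
      rintro x ⟨y, _, rfl⟩
      exact y.2
    have hKsub : K.subgroupOf N = φ.ker := by
      rw [hK, Subgroup.subgroupOf, Subgroup.comap_map_eq_self_of_injective N.subtype_injective]
    have hker : φ.ker.FiniteIndex := Subgroup.finiteIndex_ker φ
    haveI hKfi : K.FiniteIndex := by
      constructor
      rw [← Subgroup.relIndex_mul_index hKN]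
      apply mul_ne_zero
      · show (K.subgroupOf N).index ≠ 0
        rw [hKsub]
        exact hker.index_ne_zero
      · exact Subgroup.FiniteIndex.index_ne_zero
    have hgK : g ∉ K := by
      intro hmem
      obtain ⟨y, hy, hy2⟩ := hmem
      have : y = ⟨g, hgN⟩ := Subtype.ext hy2
      exact hφ (by rw [← this]; simpa using hy)
    exact ⟨Shrink.{0} (G ⧸ K.normalCore), inferInstance, inferInstance, quotHom K,
      quotHom_ne_one K hgK⟩
  · exact ⟨Shrink.{0} (G ⧸ N.normalCore), inferInstance, inferInstance, quotHom N,
      quotHom_ne_one N hgN⟩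
end
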